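/- Let d ≥ 2, let F : ℝ^d → ℂ be a Schwartz function, and let K : ℝ^d → ℂ be a bounded measurable function whose support is contained in {x ∈ ℝ^d : |x⃗| ≤ |x⁰| + C} for some C ≥ 0. Fix ε ∈ (0, 1) and n ∈ ℕ. Then there exists a constant C' such that for every a ∈ ℝ^d with |a⁰| ≤ (1 − ε)|a⃗|, one has | ∫_{ℝ^d} F(x − a) K(x) dx | ≤ C' · (1 + |a|)^{−n}. (This is the approximate locality estimate: the pairing of the translated test function F(· − a) against a kernel supported near the light cone decays faster than any inverse power of |a| as a → ∞ in spacelike directions.) -/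

import Mathlib

/-!
On the support of `K` a spacelike `a` is at distance `≳ ε ‖a‖ - C` from `x`, so there
`‖F (x - a)‖ ≤ (c (1 + ‖a‖))⁻ⁿ (1 + ‖x - a‖)ⁿ ‖F (x - a)‖`, and the last factor is integrable
because `F` is a Schwartz function.
-/

open MeasureTheory

noncomputable section

/-- Spatial part of a spacetime point. -/
def spatial {m : ℕ} (p : EuclideanSpace ℝ (Fin (m + 1))) : EuclideanSpace ℝ (Fin m) :=
  WithLp.toLp 2 (fun j : Fin m => p j.succ)

namespace SchwartzMap

variable {D V : Type*} [NormedAddCommGroup D] [NormedSpace ℝ D] [MeasurableSpace D]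
  [BorelSpace D] [SecondCountableTopology D] [NormedAddCommGroup V] [NormedSpace ℝ V]
  {μ : Measure D} [μ.HasTemperateGrowth]

lemma integrable_one_add_norm_pow_mul (f : 𝓢(D, V)) (k : ℕ) :
    Integrable (fun x ↦ (1 + ‖x‖) ^ k * ‖f x‖) μ := by
  simp_rw [add_comm (1 : ℝ), add_pow, one_pow, mul_one, Finset.sum_mul]
  refine integrable_finsetSum _ fun i _ ↦ ?_
  simpa only [mul_comm _ (k.choose i : ℝ), mul_assoc] using
    (f.integrable_pow_mul μ i).const_mul (k.choose i : ℝ)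

theorem norm_integral_comp_sub_mul_le [μ.IsAddRightInvariant] (f : 𝓢(D, ℂ)) (n : ℕ)
    {K : D → ℂ} {B : ℝ} (hKbd : ∀ x, ‖K x‖ ≤ B) {a : D} {r : ℝ} (hr : 0 < r)
    (hsupp : ∀ x ∈ Function.support K, r ≤ 1 + ‖x - a‖) :
    ‖∫ x, f (x - a) * K x ∂μ‖ ≤ B * (∫ y, (1 + ‖y‖) ^ n * ‖f y‖ ∂μ) / r ^ n := by
  have hB : 0 ≤ B := (norm_nonneg _).trans (hKbd 0)
  have hpt : ∀ x, ‖f (x - a) * K x‖ ≤ B / r ^ n * ((1 + ‖x - a‖) ^ n * ‖f (x - a)‖) := by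
    intro x
    by_cases hx : K x = 0
    · rw [hx, mul_zero, norm_zero]; positivity
    have hrn : r ^ n ≤ (1 + ‖x - a‖) ^ n := pow_le_pow_left₀ hr.le (hsupp x hx) n
    calc ‖f (x - a) * K x‖ = ‖f (x - a)‖ * ‖K x‖ := norm_mul _ _
      _ ≤ ‖f (x - a)‖ * B := by gcongr; exact hKbd x
      _ ≤ ‖f (x - a)‖ * (B * ((1 + ‖x - a‖) ^ n / r ^ n)) := by
          gcongr; exact le_mul_of_one_le_right hB ((one_le_div (by positivity)).2 hrn)
      _ = B / r ^ n * ((1 + ‖x - a‖) ^ n * ‖f (x - a)‖) := by ring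
  have hint := ((f.integrable_one_add_norm_pow_mul (μ := μ) n).comp_sub_right a).const_mul
    (B / r ^ n)
  calc ‖∫ x, f (x - a) * K x ∂μ‖
      ≤ ∫ x, B / r ^ n * ((1 + ‖x - a‖) ^ n * ‖f (x - a)‖) ∂μ :=
        norm_integral_le_of_norm_le hint (.of_forall hpt)
    _ = B * (∫ y, (1 + ‖y‖) ^ n * ‖f y‖ ∂μ) / r ^ n := by
        rw [integral_const_mul,
          integral_sub_right_eq_self (fun y ↦ (1 + ‖y‖) ^ n * ‖f y‖) a]
        ring

end SchwartzMap

section Spacetime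

variable {m : ℕ}

lemma norm_sq_eq_sq_add_norm_spatial_sq (p : EuclideanSpace ℝ (Fin (m + 1))) :
    ‖p‖ ^ 2 = p 0 ^ 2 + ‖spatial p‖ ^ 2 := by
  rw [EuclideanSpace.norm_eq, EuclideanSpace.norm_eq,
    Real.sq_sqrt (by positivity), Real.sq_sqrt (by positivity)]
  simp [Fin.sum_univ_succ, spatial, Real.norm_eq_abs, sq_abs]

lemma abs_apply_zero_le_norm (p : EuclideanSpace ℝ (Fin (m + 1))) : |p 0| ≤ ‖p‖ := by
  have := norm_sq_eq_sq_add_norm_spatial_sq p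
  nlinarith [norm_nonneg p, abs_nonneg (p 0), sq_abs (p 0)]

lemma norm_spatial_le (p : EuclideanSpace ℝ (Fin (m + 1))) : ‖spatial p‖ ≤ ‖p‖ := by
  have := norm_sq_eq_sq_add_norm_spatial_sq p
  nlinarith [norm_nonneg p, norm_nonneg (spatial p)]

lemma norm_le_abs_apply_zero_add_norm_spatial (p : EuclideanSpace ℝ (Fin (m + 1))) :
    ‖p‖ ≤ |p 0| + ‖spatial p‖ := by
  have := norm_sq_eq_sq_add_norm_spatial_sq p
  nlinarith [norm_nonneg p, norm_nonneg (spatial p), abs_nonneg (p 0), sq_abs (p 0)]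

lemma spatial_sub (p q : EuclideanSpace ℝ (Fin (m + 1))) :
    spatial (p - q) = spatial p - spatial q := by
  ext j; simp [spatial]

/-- Points `x` within `C` of the light cone are far from a spacelike `a`: both
`‖x⃗‖ - |x⁰| ≤ C` and `‖a⃗‖ - |a⁰| ≥ ε ‖a⃗‖` hold, and `y ↦ ‖y⃗‖ - |y⁰|` is
`2`-Lipschitz. -/
lemma mul_norm_le_of_near_lightCone_of_spacelike {x a : EuclideanSpace ℝ (Fin (m + 1))}
    {C ε : ℝ} (hx : ‖spatial x‖ ≤ |x 0| + C) (hε : 0 ≤ ε)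
    (ha : |a 0| ≤ (1 - ε) * ‖spatial a‖) :
    ε * ‖a‖ ≤ 2 * C + 4 * ‖x - a‖ := by
  have h0 : |x 0| - |a 0| ≤ ‖x - a‖ :=
    (abs_sub_abs_le_abs_sub _ _).trans (abs_apply_zero_le_norm (x - a))
  have hs : ‖spatial a‖ - ‖spatial x‖ ≤ ‖x - a‖ := by
    calc ‖spatial a‖ - ‖spatial x‖ ≤ ‖spatial (a - x)‖ := by
          rw [spatial_sub]; exact norm_sub_norm_le _ _
      _ ≤ ‖x - a‖ := norm_sub_rev a x ▸ norm_spatial_le _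
  have ha' : ‖a‖ ≤ 2 * ‖spatial a‖ := by
    have := norm_le_abs_apply_zero_add_norm_spatial a
    nlinarith [norm_nonneg (spatial a)]
  nlinarith [norm_nonneg (spatial a)]

end Spacetime

theorem statement14_general (m : ℕ)
    (F : SchwartzMap (EuclideanSpace ℝ (Fin (m + 1))) ℂ)
    (K : EuclideanSpace ℝ (Fin (m + 1)) → ℂ)
    (B : ℝ) (hKbd : ∀ x, ‖K x‖ ≤ B)
    (C : ℝ) (hC : 0 ≤ C)
    (hKsupp : Function.support K ⊆ {x | ‖spatial x‖ ≤ |x 0| + C})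
    (ε : ℝ) (hε1 : 0 < ε) (n : ℕ) :
    ∃ C' : ℝ, ∀ a : EuclideanSpace ℝ (Fin (m + 1)),
      |a 0| ≤ (1 - ε) * ‖spatial a‖ →
      ‖∫ x, F (x - a) * K x‖ ≤ C' / (1 + ‖a‖) ^ n := by
  -- `ε (1 + ‖a‖) ≤ ε + 2C + 4 ‖x - a‖ ≤ (ε + 2C + 4) (1 + ‖x - a‖)` on the support of `K`
  set c := ε / (ε + 2 * C + 4)
  refine ⟨B * (∫ y, (1 + ‖y‖) ^ n * ‖F y‖) / c ^ n, fun a ha ↦ ?_⟩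
  have hsep : ∀ x ∈ Function.support K, c * (1 + ‖a‖) ≤ 1 + ‖x - a‖ := by
    intro x hx
    have := mul_norm_le_of_near_lightCone_of_spacelike (hKsupp hx) hε1.le ha
    rw [div_mul_eq_mul_div, div_le_iff₀ (by positivity)]
    nlinarith [norm_nonneg (x - a)]
  calc ‖∫ x, F (x - a) * K x‖
      ≤ B * (∫ y, (1 + ‖y‖) ^ n * ‖F y‖) / (c * (1 + ‖a‖)) ^ n :=
        F.norm_integral_comp_sub_mul_le n hKbd (by positivity) hsep
    _ = B * (∫ y, (1 + ‖y‖) ^ n * ‖F y‖) / c ^ n / (1 + ‖a‖) ^ n := by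
        rw [mul_pow, div_div]

/-- Approximate locality estimate: the pairing of a translated Schwartz function
`F(·−a)` against a bounded kernel `K` supported in a `C`-neighborhood of the light
cone decays faster than any inverse power of `|a|` as `a → ∞` in spacelike
directions. -/
theorem statement14 (m : ℕ) (hm : 1 ≤ m)
    (F : SchwartzMap (EuclideanSpace ℝ (Fin (m + 1))) ℂ)
    (K : EuclideanSpace ℝ (Fin (m + 1)) → ℂ) (hKmeas : Measurable K)
    (B : ℝ) (hKbd : ∀ x, ‖K x‖ ≤ B)
    (C : ℝ) (hC : 0 ≤ C)
    (hKsupp : Function.support K ⊆ {x | ‖spatial x‖ ≤ |x 0| + C})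
    (ε : ℝ) (hε1 : 0 < ε) (hε2 : ε < 1) (n : ℕ) :
    ∃ C' : ℝ, ∀ a : EuclideanSpace ℝ (Fin (m + 1)),
      |a 0| ≤ (1 - ε) * ‖spatial a‖ →
      ‖∫ x, F (x - a) * K x‖ ≤ C' / (1 + ‖a‖) ^ n :=
  statement14_general m F K B hKbd C hC hKsupp ε hε1 n
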